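/- A finite simple graph with at least two vertices is an undirected Fitch graph if and only if it is a complete multipartite graph. -/

import Mathlib

open SimpleGraph

/-- A leaf of a graph is a vertex with exactly one neighbour (i.e. a vertex of degree 1). -/
def SimpleGraph.IsLeaf {V : Type*} (T : SimpleGraph V) (v : V) : Prop :=
  ∃! u, T.Adj v u

/-- The undirected Fitch graph explained by an edge-labelled tree `(T, lam)`
(labels: `true` = 1, `false` = 0): its vertices are the leaves of `T`, and two
distinct leaves are adjacent iff the (unique) path between them in `T` contains
at least one edge labelled `1`. -/
def fitchGraph {V : Type*} (T : SimpleGraph V) (lam : Sym2 V → Bool) :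
    SimpleGraph {v : V // T.IsLeaf v} where
  Adj x y := x ≠ y ∧ ∃ p : T.Walk x.1 y.1, p.IsPath ∧ ∃ e ∈ p.edges, lam e = true
  symm := by
    constructor
    rintro x y ⟨hxy, p, hp, e, he, hl⟩
    exact ⟨hxy.symm, p.reverse, hp.reverse, e, by
      rw [SimpleGraph.Walk.edges_reverse]; exact List.mem_reverse.mpr he, hl⟩
  loopless := by constructor; rintro x ⟨hx, -⟩; exact hx rfl

/-- A graph is an undirected Fitch graph if it is isomorphic to the Fitch graph
explained by some edge-labelled finite tree. -/
def IsFitchGraph {W : Type*} (G : SimpleGraph W) : Prop :=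
  ∃ (V : Type) (T : SimpleGraph V) (lam : Sym2 V → Bool),
    Finite V ∧ T.IsTree ∧ Nonempty (G ≃g fitchGraph T lam)

/-- A graph is complete multipartite if its vertex set can be partitioned into
nonempty independent parts such that two vertices are adjacent iff they lie in
different parts. -/
def IsCompleteMultipartite' {W : Type*} (G : SimpleGraph W) : Prop :=
  ∃ P : Set (Set W), (∀ p ∈ P, p.Nonempty) ∧ (∀ x : W, ∃! p, p ∈ P ∧ x ∈ p) ∧
    ∀ x y : W, G.Adj x y ↔ ∃ p ∈ P, ∃ q ∈ P, p ≠ q ∧ x ∈ p ∧ y ∈ q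


/-!
In a tree the path between two leaves avoids every edge labelled `1` iff the two leaves lie in
the same component of the forest obtained by deleting those edges. Hence non-adjacency in a Fitch
graph is an equivalence relation, which is exactly complete multipartiteness.

Conversely, given the parts of a complete multipartite graph, hang every vertex from a node for
its part and every part node from the node of one fixed part, labelling `1` exactly the edges
between part nodes. Two vertices are then joined by `0`-edges iff they lie in the same part. With
at least two vertices, no part node is a leaf.
-/

namespace SimpleGraph

variable {V : Type*}

theorem Reachable.apply_eq_of_forall_adj {β : Type*} {G : SimpleGraph V} {f : V → β}
    (hf : ∀ u v, G.Adj u v → f u = f v) {u v : V} (h : G.Reachable u v) : f u = f v := by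
  rw [reachable_eq_reflTransGen] at h
  induction h with
  | refl => rfl
  | tail _ hbc ih => exact ih.trans (hf _ _ hbc)

theorem not_isLeaf_of_adj {T : SimpleGraph V} {v a b : V} (ha : T.Adj v a) (hb : T.Adj v b)
    (hab : a ≠ b) : ¬T.IsLeaf v :=
  fun ⟨_, _, hu⟩ => hab ((hu a ha).trans (hu b hb).symm)

def parentGraph (parent : V → V) : SimpleGraph V := fromRel (parent · = ·)

theorem parentGraph_adj {parent : V → V} {u v : V} :
    (parentGraph parent).Adj u v ↔ u ≠ v ∧ (parent u = v ∨ parent v = u) :=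
  fromRel_adj _ _ _

section ParentGraph

variable {parent : V → V} {rank : V → ℕ} {root : V}

theorem reachable_parentGraph_root (hrank : ∀ v, v ≠ root → rank (parent v) < rank v)
    (v : V) : (parentGraph parent).Reachable v root := by
  induction hn : rank v using Nat.strong_induction_on generalizing v with
  | _ n ih =>
    rcases eq_or_ne v root with rfl | hv
    · rfl
    have hadj : (parentGraph parent).Adj v (parent v) :=
      parentGraph_adj.2 ⟨fun h => (hrank v hv).ne (congrArg rank h.symm), Or.inl rfl⟩
    exact hadj.reachable.trans (ih _ (hn ▸ hrank v hv) _ rfl)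

theorem rank_le_of_reflTransGen (hroot : parent root = root)
    (hrank : ∀ v, v ≠ root → rank (parent v) < rank v) {a b : V}
    (h : Relation.ReflTransGen (parent · = ·) a b) : b = root ∨ rank b ≤ rank a := by
  induction h with
  | refl => exact Or.inr le_rfl
  | tail _ hbc ih =>
    subst hbc
    rcases eq_or_ne _ root with hb | hb
    · exact Or.inl (hb ▸ hroot)
    · exact Or.inr ((hrank _ hb).le.trans (ih.resolve_left hb))

theorem isBridge_parentGraph (hroot : parent root = root)
    (hrank : ∀ v, v ≠ root → rank (parent v) < rank v) {v : V} (hv : v ≠ root) :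
    (parentGraph parent).IsBridge s(v, parent v) := by
  -- Being a descendant of `v` is invariant along every edge except `s(v, parent v)`.
  let IsDescendant (u : V) : Prop := Relation.ReflTransGen (parent · = ·) u v
  have hstep : ∀ u, u ≠ v → (IsDescendant u ↔ IsDescendant (parent u)) := by
    intro u hu
    refine ⟨fun h => ?_, Relation.ReflTransGen.head rfl⟩
    obtain ⟨_, rfl, hcv⟩ := (Relation.ReflTransGen.cases_head_iff.1 h).resolve_left hu
    exact hcv
  have hinv : ∀ u w, ((parentGraph parent).deleteEdges {s(v, parent v)}).Adj u w →
      IsDescendant u = IsDescendant w := by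
    intro u w huw
    obtain ⟨huw, hne⟩ := deleteEdges_adj.1 huw
    obtain ⟨-, rfl | rfl⟩ := parentGraph_adj.1 huw
    · exact propext (hstep u (by rintro rfl; exact hne rfl))
    · exact (propext (hstep w (by rintro rfl; exact hne Sym2.eq_swap))).symm
  intro hreach
  have hdesc : IsDescendant (parent v) := hreach.apply_eq_of_forall_adj hinv ▸ .refl
  rcases rank_le_of_reflTransGen hroot hrank hdesc with h | h
  · exact hv h
  · exact (hrank v hv).not_ge h

theorem isTree_parentGraph (hroot : parent root = root)
    (hrank : ∀ v, v ≠ root → rank (parent v) < rank v) : (parentGraph parent).IsTree := by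
  refine ⟨?_, isAcyclic_iff_forall_adj_isBridge.2 fun u w huw => ?_⟩
  · have : Nonempty V := ⟨root⟩
    exact .mk fun u w => (reachable_parentGraph_root hrank u).trans
      (reachable_parentGraph_root hrank w).symm
  · obtain ⟨hne, rfl | rfl⟩ := parentGraph_adj.1 huw
    · exact isBridge_parentGraph hroot hrank fun h => hne (h ▸ hroot).symm
    · rw [Sym2.eq_swap]
      exact isBridge_parentGraph hroot hrank fun h => hne (h ▸ hroot)

end ParentGraph

end SimpleGraph

theorem Setoid.exists_ne_mem_iff_not_mkClasses {α : Type*} {c : Set (Set α)}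
    (H : ∀ a, ∃! b ∈ c, a ∈ b) {x y : α} :
    (∃ p ∈ c, ∃ q ∈ c, p ≠ q ∧ x ∈ p ∧ y ∈ q) ↔ ¬Setoid.mkClasses c H x y := by
  constructor
  · rintro ⟨p, hp, q, hq, hpq, hx, hy⟩ h
    exact hpq (Setoid.eq_of_mem_eqv_class H hp (h p hp hx) hq hy)
  · intro h
    change ¬∀ p ∈ c, x ∈ p → y ∈ p at h
    push Not at h
    obtain ⟨p, hp, hx, hy⟩ := h
    obtain ⟨q, ⟨hq, hyq⟩, -⟩ := H y
    exact ⟨p, hp, q, hq, by rintro rfl; exact hy hyq, hx, hyq⟩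

theorem isCompleteMultipartite'_iff {W : Type*} {G : SimpleGraph W} :
    IsCompleteMultipartite' G ↔ G.IsCompleteMultipartite := by
  constructor
  · rintro ⟨P, -, H, hadj⟩
    have hnadj : ∀ x y, ¬G.Adj x y ↔ Setoid.mkClasses P H x y := fun x y => by
      rw [hadj, Setoid.exists_ne_mem_iff_not_mkClasses, not_not]
    exact ⟨fun x y z hxy hyz => (hnadj x z).2 <|
      (Setoid.mkClasses P H).trans ((hnadj x y).1 hxy) ((hnadj y z).1 hyz)⟩
  · intro h
    refine ⟨h.setoid.classes, fun p hp => Setoid.nonempty_of_mem_partition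
      (Setoid.isPartition_classes _) hp, Setoid.classes_eqv_classes, fun x y => ?_⟩
    rw [Setoid.exists_ne_mem_iff_not_mkClasses Setoid.classes_eqv_classes,
      Setoid.mkClasses_classes]
    exact not_not.symm

theorem fitchGraph_adj_iff {V : Type*} {T : SimpleGraph V} (hT : T.IsTree) (lam : Sym2 V → Bool)
    {x y : {v : V // T.IsLeaf v}} :
    (fitchGraph T lam).Adj x y ↔ ¬(T.deleteEdges {e | lam e = true}).Reachable x y := by
  constructor
  · rintro ⟨-, p, hp, e, he, hl⟩ hreach
    obtain ⟨q, hq⟩ := hreach.exists_isPath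
    have hpq : p = q.mapLe (T.deleteEdges_le _) :=
      (hT.existsUnique_path _ _).unique hp ((Walk.isPath_mapLe _).2 hq)
    rw [hpq, Walk.edges_mapLe_eq_edges] at he
    have he' := q.edges_subset_edgeSet he
    rw [edgeSet_deleteEdges] at he'
    exact he'.2 hl
  · intro h
    obtain ⟨p, hp⟩ := (hT.connected.preconnected x y).exists_isPath
    obtain ⟨e, hl, he⟩ := p.exists_mem_edges_of_not_reachable_deleteEdges h
    exact ⟨fun hxy => h (hxy ▸ .rfl), p, hp, e, he, hl⟩

theorem isCompleteMultipartite_fitchGraph {V : Type*} {T : SimpleGraph V} (hT : T.IsTree)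
    (lam : Sym2 V → Bool) : (fitchGraph T lam).IsCompleteMultipartite :=
  ⟨fun x y z hxy hyz => by
    rw [fitchGraph_adj_iff hT, not_not] at *
    exact hxy.trans hyz⟩

theorem IsFitchGraph.of_iso {W W' : Type*} {G : SimpleGraph W} {H : SimpleGraph W'} (e : G ≃g H)
    (h : IsFitchGraph H) : IsFitchGraph G :=
  let ⟨V, T, lam, hV, hT, ⟨f⟩⟩ := h
  ⟨V, T, lam, hV, hT, ⟨e.trans f⟩⟩

section ClassTree

variable {W : Type*} (r : Setoid W) (q₀ : Quotient r)

def classParent : W ⊕ Quotient r → W ⊕ Quotient r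
  | .inl x => .inr ⟦x⟧
  | .inr _ => .inr q₀

abbrev classTree : SimpleGraph (W ⊕ Quotient r) := parentGraph (classParent r q₀)

def classLabel {α β : Type*} : Sym2 (α ⊕ β) → Bool :=
  Sym2.lift ⟨fun u v => u.isRight && v.isRight, fun _ _ => Bool.and_comm _ _⟩

theorem isTree_classTree : (classTree r q₀).IsTree := by
  classical
  refine isTree_parentGraph (root := .inr q₀)
    (rank := Sum.elim (fun _ => 2) fun q => if q = q₀ then 0 else 1) rfl ?_
  rintro (x | q) hv
  · simp only [classParent, Sum.elim_inl, Sum.elim_inr]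
    split_ifs <;> omega
  · simp_all [classParent]

theorem isLeaf_classTree_inl (x : W) : (classTree r q₀).IsLeaf (.inl x) := by
  refine ⟨.inr ⟦x⟧, parentGraph_adj.2 ⟨Sum.inl_ne_inr, .inl rfl⟩, fun u hu => ?_⟩
  obtain ⟨-, h | h⟩ := parentGraph_adj.1 hu
  · exact h.symm
  · cases u <;> simp [classParent] at h

theorem not_isLeaf_classTree_inr [Nontrivial W] (q : Quotient r) :
    ¬(classTree r q₀).IsLeaf (.inr q) := by
  obtain ⟨x, rfl⟩ := q.exists_rep
  have hx : (classTree r q₀).Adj (.inr ⟦x⟧) (.inl x) :=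
    parentGraph_adj.2 ⟨Sum.inr_ne_inl, .inr rfl⟩
  by_cases hq : ⟦x⟧ = q₀
  · obtain ⟨y, hyx⟩ := exists_ne x
    by_cases hy : ⟦y⟧ = q₀
    · refine not_isLeaf_of_adj hx (b := .inl y) (parentGraph_adj.2 ⟨Sum.inr_ne_inl, .inr ?_⟩)
        (by simpa using hyx.symm)
      simp [classParent, hq, hy]
    · refine not_isLeaf_of_adj hx (b := .inr ⟦y⟧)
        (parentGraph_adj.2 ⟨by simpa [hq] using Ne.symm hy, .inr ?_⟩) Sum.inl_ne_inr
      simp [classParent, hq]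
  · exact not_isLeaf_of_adj hx (parentGraph_adj.2 ⟨by simpa [classParent] using hq, .inl rfl⟩)
      Sum.inl_ne_inr

theorem reachable_classTree_inl_iff {x y : W} :
    ((classTree r q₀).deleteEdges {e | classLabel e = true}).Reachable (.inl x) (.inl y) ↔
      r x y := by
  constructor
  · intro h
    refine Quotient.exact (h.apply_eq_of_forall_adj (f := Sum.elim (Quotient.mk r) id) ?_)
    -- every `0`-edge joins a leaf to its class node
    rintro (u | u) (v | v) huv <;> simp [classParent, classLabel, parentGraph_adj] at huv ⊢ <;>
      simp [huv]
  · intro h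
    have hleaf : ∀ z, ((classTree r q₀).deleteEdges {e | classLabel e = true}).Adj
        (.inl z) (.inr ⟦z⟧) := fun z =>
      deleteEdges_adj.2 ⟨parentGraph_adj.2 ⟨Sum.inl_ne_inr, .inl rfl⟩, by simp [classLabel]⟩
    have hxy : (⟦x⟧ : Quotient r) = ⟦y⟧ := Quotient.sound h
    exact (hleaf x).reachable.trans (hxy ▸ (hleaf y).reachable.symm)

noncomputable def leafEquivClassTree [Nontrivial W] : W ≃ {v // (classTree r q₀).IsLeaf v} :=
  Equiv.ofBijective (fun x => ⟨.inl x, isLeaf_classTree_inl r q₀ x⟩) <| by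
    refine ⟨fun x y h => by simpa using h, ?_⟩
    rintro ⟨x | q, hv⟩
    · exact ⟨x, rfl⟩
    · exact absurd hv (not_isLeaf_classTree_inr r q₀ q)

end ClassTree

noncomputable def SimpleGraph.IsCompleteMultipartite.isoFitchGraph {W : Type*} [Nontrivial W]
    {G : SimpleGraph W} (h : G.IsCompleteMultipartite) (q₀ : Quotient h.setoid) :
    G ≃g fitchGraph (classTree h.setoid q₀) classLabel where
  toEquiv := leafEquivClassTree h.setoid q₀
  map_rel_iff' {x y} := by
    rw [fitchGraph_adj_iff (isTree_classTree _ q₀)]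
    exact (reachable_classTree_inl_iff _ q₀).not.trans not_not

theorem isFitchGraph_of_isCompleteMultipartite {W : Type} [Finite W] [Nontrivial W]
    {G : SimpleGraph W} (h : G.IsCompleteMultipartite) : IsFitchGraph G :=
  let q₀ : Quotient h.setoid := ⟦Classical.arbitrary W⟧
  ⟨_, _, classLabel, inferInstance, isTree_classTree _ q₀, ⟨h.isoFitchGraph q₀⟩⟩

/-- a finite simple graph with at least two vertices is an
undirected Fitch graph iff it is a complete multipartite graph. -/
theorem isFitch_iff_completeMultipartite {W : Type*} [Fintype W] (G : SimpleGraph W)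
    (hW : 2 ≤ Fintype.card W) :
    IsFitchGraph G ↔ IsCompleteMultipartite' G := by
  rw [isCompleteMultipartite'_iff]
  constructor
  · rintro ⟨V, T, lam, -, hT, ⟨e⟩⟩
    exact (isCompleteMultipartite_fitchGraph hT lam).comap e.toEmbedding
  intro h
  have : Nontrivial (Fin (Fintype.card W)) := Fin.nontrivial_iff_two_le.2 hW
  let e := Iso.map (Fintype.equivFin W) G
  exact .of_iso e (isFitchGraph_of_isCompleteMultipartite (h.comap e.symm.toEmbedding))
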